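/- arXiv:2411.04922 — 4 statements merged into one kernel-verified Lean document; each statement's English description precedes it below -/
import Mathlib

section
/- Define X̂₀(x,p) = ∫₀ˣ 1^dr₀(y,p) dy, where 1^dr₀(y,·) is the dressing of the constant function 1 with respect to n₀(y,·). Under the standing assumptions, for every x > y and every p, R(κ) ≤ (X̂₀(x,p) − X̂₀(y,p))/(x − y) ≤ 1/(1 − κ), where κ = ‖T n₀‖_op and R(κ) = 1 − κ in the fixed-sign case and R(κ) = (1 − 2κ)/(1 − κ) otherwise. Consequently X̂₀(·,p) is strictly increasing, bi-Lipschitz, and a bijection of ℝ, and its inverse X₀(·,p) satisfies 1 − κ ≤ (X₀(x̂,p) − X₀(ŷ,p))/(x̂ − ŷ) ≤ 1/R(κ) for x̂ > ŷ. -/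
/-!
For fixed `y`, `g = 1^dr₀(y, ·)` solves `g = 1 + K g` with the kernel `K p q = T p q * n₀ y q`,
whose norm `sup_p ∫ |K p q| dq` is at most `κ < 1`. Taking the supremum over `p` gives
`sup |g| ≤ 1 + κ sup |g|`, so `|g| ≤ 1/(1-κ)` and then `g ≥ 1 - κ/(1-κ) = (1-2κ)/(1-κ)`.
When `K` has a fixed sign, comparing `g` with its infimum shows `g ≥ 0`, which improves the
lower bound to `1 - κ`. Integrating these pointwise bounds in `y` bounds the slopes of
`X̂₀(·, p)`, so it is strictly increasing, and the slopes of its inverse `X₀(·, p)` are the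
reciprocals.
-/

open MeasureTheory Set

section KernelIntegrals

variable {α : Type*} [MeasurableSpace α] {μ : Measure α}

lemma mul_le_integral_mul_of_nonneg {L g : α → ℝ} {κ c : ℝ} (hL : ∀ q, 0 ≤ L q)
    (hL_int : Integrable L μ) (hLκ : ∫ q, L q ∂μ ≤ κ)
    (hLg : Integrable (fun q => L q * g q) μ)
    (hc : c ≤ 0) (hcg : ∀ q, c ≤ g q) :
    c * κ ≤ ∫ q, L q * g q ∂μ :=
  calc c * κ ≤ c * ∫ q, L q ∂μ := mul_le_mul_of_nonpos_left hLκ hc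
    _ = ∫ q, L q * c ∂μ := by rw [integral_mul_const, mul_comm]
    _ ≤ ∫ q, L q * g q ∂μ :=
      integral_mono (hL_int.mul_const c) hLg fun q => mul_le_mul_of_nonneg_left (hcg q) (hL q)

lemma integral_mul_le_of_nonneg {L g : α → ℝ} {κ c : ℝ} (hL : ∀ q, 0 ≤ L q)
    (hL_int : Integrable L μ) (hLκ : ∫ q, L q ∂μ ≤ κ)
    (hLg : Integrable (fun q => L q * g q) μ)
    (hc : 0 ≤ c) (hgc : ∀ q, g q ≤ c) :
    ∫ q, L q * g q ∂μ ≤ c * κ :=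
  calc ∫ q, L q * g q ∂μ ≤ ∫ q, L q * c ∂μ :=
        integral_mono hLg (hL_int.mul_const c) fun q =>
          mul_le_mul_of_nonneg_left (hgc q) (hL q)
    _ = c * ∫ q, L q ∂μ := by rw [integral_mul_const, mul_comm]
    _ ≤ c * κ := mul_le_mul_of_nonneg_left hLκ hc

lemma abs_integral_mul_le {K g : α → ℝ} {κ S : ℝ} (hK : Integrable K μ)
    (hKκ : ∫ q, |K q| ∂μ ≤ κ) (hS : 0 ≤ S) (hgS : ∀ q, |g q| ≤ S) :
    |∫ q, K q * g q ∂μ| ≤ κ * S :=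
  calc |∫ q, K q * g q ∂μ| ≤ ∫ q, |K q| * |g q| ∂μ := by
        simpa only [Real.norm_eq_abs, abs_mul] using
          norm_integral_le_integral_norm (μ := μ) fun q => K q * g q
    _ ≤ ∫ q, |K q| * S ∂μ :=
      integral_mono_of_nonneg (ae_of_all _ fun q => by positivity) (hK.abs.mul_const S)
        (ae_of_all _ fun q => mul_le_mul_of_nonneg_left (hgS q) (abs_nonneg _))
    _ = (∫ q, |K q| ∂μ) * S := integral_mul_const _ _
    _ ≤ κ * S := mul_le_mul_of_nonneg_right hKκ hS

end KernelIntegrals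

section Dressing

variable {α : Type*} [MeasurableSpace α] {μ : Measure α} {K : α → α → ℝ} {g : α → ℝ} {κ : ℝ}

/-- `g` is the dressing `1^dr` of the constant function `1` with respect to the kernel `K`. -/
def IsDressingOfOne (μ : Measure α) (K : α → α → ℝ) (g : α → ℝ) : Prop :=
  ∀ p, g p = 1 + ∫ q, K p q * g q ∂μ

lemma abs_dressing_le (hK : ∀ p, Integrable (K p) μ) (hKκ : ∀ p, ∫ q, |K p q| ∂μ ≤ κ)
    (hκ : κ < 1) (hg_bdd : ∃ C, ∀ p, |g p| ≤ C) (hg : IsDressingOfOne μ K g)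
    (p : α) : |g p| ≤ 1 / (1 - κ) := by
  obtain ⟨C, hC⟩ := hg_bdd
  have hbdd : BddAbove (range fun q => |g q|) := ⟨C, by rintro _ ⟨q, rfl⟩; exact hC q⟩
  set S := ⨆ q, |g q|
  have hgS : ∀ q, |g q| ≤ S := le_ciSup hbdd
  have hS : 0 ≤ S := (abs_nonneg _).trans (hgS p)
  have hS_le : S ≤ 1 + κ * S := by
    have : Nonempty α := ⟨p⟩
    refine ciSup_le fun q => ?_
    rw [hg q]
    refine (abs_add_le _ _).trans ?_
    linarith [abs_one (α := ℝ), abs_integral_mul_le (hK q) (hKκ q) hS hgS]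
  rw [le_div_iff₀ (by linarith)]
  nlinarith [hgS p]

lemma one_sub_two_mul_div_le_dressing (hK : ∀ p, Integrable (K p) μ)
    (hKκ : ∀ p, ∫ q, |K p q| ∂μ ≤ κ) (hκ : κ < 1) (hg_bdd : ∃ C, ∀ p, |g p| ≤ C)
    (hg : IsDressingOfOne μ K g)
    (p : α) : (1 - 2 * κ) / (1 - κ) ≤ g p := by
  have hS : 0 ≤ 1 / (1 - κ) := div_nonneg zero_le_one (by linarith)
  have hint := abs_integral_mul_le (hK p) (hKκ p) hS (abs_dressing_le hK hKκ hκ hg_bdd hg)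
  have hsplit : (1 - 2 * κ) / (1 - κ) = 1 - κ * (1 / (1 - κ)) := by
    field_simp [show 1 - κ ≠ 0 by linarith]
    ring
  rw [hsplit, hg p]
  linarith [neg_abs_le (∫ q, K p q * g q ∂μ)]

lemma one_le_dressing_of_nonneg (hK : ∀ p, Integrable (K p) μ)
    (hKκ : ∀ p, ∫ q, |K p q| ∂μ ≤ κ) (hκ : κ < 1) (hK0 : ∀ p q, 0 ≤ K p q)
    (hg_meas : AEStronglyMeasurable g μ) (hg_bdd : ∃ C, ∀ p, |g p| ≤ C)
    (hg : IsDressingOfOne μ K g) (p : α) : 1 ≤ g p := by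
  obtain ⟨C, hC⟩ := hg_bdd
  have hKg : ∀ p, Integrable (fun q => K p q * g q) μ :=
    fun p => (hK p).mul_bdd hg_meas (ae_of_all _ hC)
  have hKκ' : ∀ p, ∫ q, K p q ∂μ ≤ κ := fun p => by
    simpa only [abs_of_nonneg, hK0] using hKκ p
  have lower : ∀ c ≤ 0, (∀ q, c ≤ g q) → ∀ q, 1 + c * κ ≤ g q := fun c hc hcg q => by
    rw [hg q]
    linarith [mul_le_integral_mul_of_nonneg (hK0 q) (hK q) (hKκ' q) (hKg q) hc hcg]
  have hbdd : BddBelow (range g) :=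
    ⟨-C, by rintro _ ⟨q, rfl⟩; linarith [neg_abs_le (g q), hC q]⟩
  have hm : 0 ≤ ⨅ q, g q := by
    have : Nonempty α := ⟨p⟩
    by_contra! hm
    have := le_ciInf (lower _ hm.le (ciInf_le hbdd))
    nlinarith [mul_neg_of_neg_of_pos hm (sub_pos.2 hκ)]
  simpa using lower 0 le_rfl (fun q => hm.trans (ciInf_le hbdd q)) p

lemma one_sub_le_dressing_of_nonpos (hK : ∀ p, Integrable (K p) μ)
    (hKκ : ∀ p, ∫ q, |K p q| ∂μ ≤ κ) (hκ : κ < 1) (hK0 : ∀ p q, K p q ≤ 0)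
    (hg_meas : AEStronglyMeasurable g μ) (hg_bdd : ∃ C, ∀ p, |g p| ≤ C)
    (hg : IsDressingOfOne μ K g) (p : α) : 1 - κ ≤ g p := by
  obtain ⟨C, hC⟩ := hg_bdd
  have hκ0 : 0 ≤ κ := (integral_nonneg fun q => abs_nonneg _).trans (hKκ p)
  have hL0 : ∀ p q, 0 ≤ -K p q := fun p q => neg_nonneg.2 (hK0 p q)
  have hLg : ∀ p, Integrable (fun q => -K p q * g q) μ :=
    fun p => (hK p).neg.mul_bdd hg_meas (ae_of_all _ hC)
  have hLκ : ∀ p, ∫ q, -K p q ∂μ ≤ κ := fun p => by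
    simpa only [abs_of_nonpos, hK0] using hKκ p
  have hg' : ∀ q, g q = 1 - ∫ r, -K q r * g r ∂μ := fun q => by
    simpa only [neg_mul, integral_neg, sub_neg_eq_add] using hg q
  have upper : ∀ c ≤ 0, (∀ q, c ≤ g q) → ∀ q, g q ≤ 1 - c * κ := fun c hc hcg q => by
    rw [hg' q]
    linarith [mul_le_integral_mul_of_nonneg (hL0 q) (hK q).neg (hLκ q) (hLg q) hc hcg]
  have lower : ∀ c ≥ 0, (∀ q, g q ≤ c) → ∀ q, 1 - c * κ ≤ g q := fun c hc hgc q => by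
    rw [hg' q]
    linarith [integral_mul_le_of_nonneg (hL0 q) (hK q).neg (hLκ q) (hLg q) hc hgc]
  have hbdd : BddBelow (range g) :=
    ⟨-C, by rintro _ ⟨q, rfl⟩; linarith [neg_abs_le (g q), hC q]⟩
  -- if `m = inf g < 0`, then `g ≤ 1 - m κ`, so `m ≥ 1 - κ + m κ²`, impossible for `κ < 1`
  have hm : 0 ≤ ⨅ q, g q := by
    have : Nonempty α := ⟨p⟩
    by_contra! hm
    have hU := upper _ hm.le (ciInf_le hbdd)
    have := le_ciInf (lower _ (by nlinarith) hU)
    nlinarith [mul_neg_of_neg_of_pos hm (sub_pos.2 hκ)]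
  have hg_le_one : ∀ q, g q ≤ 1 := by
    simpa using upper 0 le_rfl fun q => hm.trans (ciInf_le hbdd q)
  simpa using lower 1 zero_le_one hg_le_one p

lemma one_sub_le_dressing_of_fixed_sign (hK : ∀ p, Integrable (K p) μ)
    (hKκ : ∀ p, ∫ q, |K p q| ∂μ ≤ κ) (hκ : κ < 1)
    (hsign : (∀ p q, 0 ≤ K p q) ∨ (∀ p q, K p q ≤ 0))
    (hg_meas : AEStronglyMeasurable g μ) (hg_bdd : ∃ C, ∀ p, |g p| ≤ C)
    (hg : IsDressingOfOne μ K g) (p : α) : 1 - κ ≤ g p := by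
  rcases hsign with hK0 | hK0
  · have hκ0 : 0 ≤ κ := (integral_nonneg fun q => abs_nonneg _).trans (hKκ p)
    linarith [one_le_dressing_of_nonneg hK hKκ hκ hK0 hg_meas hg_bdd hg p]
  · exact one_sub_le_dressing_of_nonpos hK hKκ hκ hK0 hg_meas hg_bdd hg p

lemma le_dressing {Rκ : ℝ} (hK : ∀ p, Integrable (K p) μ)
    (hKκ : ∀ p, ∫ q, |K p q| ∂μ ≤ κ)
    (hg_meas : AEStronglyMeasurable g μ) (hg_bdd : ∃ C, ∀ p, |g p| ≤ C)
    (hg : IsDressingOfOne μ K g)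
    (hR : (((∀ p q, 0 ≤ K p q) ∨ (∀ p q, K p q ≤ 0)) ∧ κ < 1 ∧ Rκ = 1 - κ) ∨
      (κ < 1 / 2 ∧ Rκ = (1 - 2 * κ) / (1 - κ))) (p : α) : Rκ ≤ g p := by
  rcases hR with ⟨hsign, hκ, rfl⟩ | ⟨hκ, rfl⟩
  · exact one_sub_le_dressing_of_fixed_sign hK hKκ hκ hsign hg_meas hg_bdd hg p
  · exact one_sub_two_mul_div_le_dressing hK hKκ (by linarith) hg_bdd hg p

end Dressing

section Slope

lemma strictMono_of_le_slope {F : ℝ → ℝ} {a : ℝ} (ha : 0 < a)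
    (hF : ∀ x y, y < x → a ≤ slope F y x) : StrictMono F := fun y x hyx => by
  have h := ha.trans_le (hF x y hyx)
  rw [slope_def_field, div_pos_iff_of_pos_right (sub_pos.2 hyx)] at h
  exact sub_pos.1 h

lemma slope_rightInverse_mem_Icc {F G : ℝ → ℝ} {a b : ℝ} (ha : 0 < a)
    (hFG : Function.RightInverse G F)
    (hF : ∀ x y, y < x → slope F y x ∈ Icc a b) {x y : ℝ} (hyx : y < x) :
    slope G y x ∈ Icc b⁻¹ a⁻¹ := by
  have hG : G y < G x :=
    (strictMono_of_le_slope ha fun x y h => (hF x y h).1).lt_iff_lt.1 (by rwa [hFG x, hFG y])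
  have hinv : slope G y x = (slope F (G y) (G x))⁻¹ := by
    rw [slope_def_field, slope_def_field, hFG x, hFG y, inv_div]
  obtain ⟨h₁, h₂⟩ := hF _ _ hG
  rw [hinv]
  exact ⟨inv_anti₀ (ha.trans_le h₁) h₂, inv_anti₀ ha h₁⟩

lemma slope_intervalIntegral_mem_Icc {f : ℝ → ℝ} {a b c : ℝ}
    (hf : AEStronglyMeasurable f volume) (haf : ∀ t, a ≤ f t) (hfb : ∀ t, f t ≤ b)
    {x y : ℝ} (hyx : y < x) :
    slope (fun x => ∫ t in c..x, f t) y x ∈ Icc a b := by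
  have hf_int : ∀ u v, IntervalIntegrable f volume u v := fun u v =>
    (intervalIntegrable_const (c := max |a| |b|)).mono_fun hf.restrict
      (ae_of_all _ fun t => (abs_le_max_abs_abs (haf t) (hfb t)).trans (le_abs_self _))
  have hxy : 0 < x - y := sub_pos.2 hyx
  rw [slope_def_field, intervalIntegral.integral_interval_sub_left (hf_int c x) (hf_int c y)]
  have hlow := intervalIntegral.integral_mono_on hyx.le intervalIntegrable_const (hf_int y x)
    fun t _ => haf t
  have hup := intervalIntegral.integral_mono_on hyx.le (hf_int y x) intervalIntegrable_const
    fun t _ => hfb t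
  rw [intervalIntegral.integral_const, smul_eq_mul] at hlow hup
  exact ⟨(le_div_iff₀ hxy).2 (by linarith), (div_le_iff₀ hxy).2 (by linarith)⟩

end Slope

lemma integral_abs_mul_le_iSup {ι α : Type*} [MeasurableSpace α] {μ : Measure α}
    {T : α → α → ℝ} {n : ι → α → ℝ} (hT_int : ∀ p, Integrable (T p) μ)
    (hT_op : ∃ M, ∀ p, ∫ q, |T p q| ∂μ ≤ M) (hn_nonneg : ∀ x q, 0 ≤ n x q)
    (hn_bdd : ∃ C, ∀ x q, n x q ≤ C) (hsup_meas : Measurable fun q => ⨆ x, n x q)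
    (y : ι) (p : α) :
    ∫ q, |T p q * n y q| ∂μ ≤ ⨆ p, ∫ q, |T p q| * ⨆ x, n x q ∂μ := by
  obtain ⟨C, hC⟩ := hn_bdd
  obtain ⟨M, hM⟩ := hT_op
  have hnN : ∀ x q, n x q ≤ ⨆ x, n x q := fun x q =>
    le_ciSup (f := fun x => n x q) ⟨C, by rintro _ ⟨x, rfl⟩; exact hC x q⟩ x
  have : Nonempty ι := ⟨y⟩
  have hN : ∀ q, |⨆ x, n x q| ≤ C := fun q => by
    rw [abs_of_nonneg ((hn_nonneg y q).trans (hnN y q))]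
    exact ciSup_le fun x => hC x q
  have hTN : ∀ p, Integrable (fun q => |T p q| * ⨆ x, n x q) μ := fun p =>
    (hT_int p).abs.mul_bdd hsup_meas.aestronglyMeasurable (ae_of_all _ hN)
  have hbdd : BddAbove (range fun p => ∫ q, |T p q| * ⨆ x, n x q ∂μ) := by
    refine ⟨C * M, ?_⟩
    rintro _ ⟨p, rfl⟩
    calc ∫ q, |T p q| * ⨆ x, n x q ∂μ ≤ ∫ q, C * |T p q| ∂μ :=
          integral_mono (hTN p) ((hT_int p).abs.const_mul C) fun q => by
            rw [mul_comm C]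
            exact mul_le_mul_of_nonneg_left ((le_abs_self _).trans (hN q)) (abs_nonneg _)
      _ = C * ∫ q, |T p q| ∂μ := integral_const_mul _ _
      _ ≤ C * M := mul_le_mul_of_nonneg_left (hM p) ((hn_nonneg y p).trans (hC y p))
  calc ∫ q, |T p q * n y q| ∂μ ≤ ∫ q, |T p q| * ⨆ x, n x q ∂μ :=
        integral_mono_of_nonneg (ae_of_all _ fun q => abs_nonneg _) (hTN p)
          (ae_of_all _ fun q => by
            show |T p q * n y q| ≤ _
            rw [abs_mul, abs_of_nonneg (hn_nonneg y q)]
            exact mul_le_mul_of_nonneg_left (hnN y q) (abs_nonneg _))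
    _ ≤ ⨆ p, ∫ q, |T p q| * ⨆ x, n x q ∂μ := le_ciSup hbdd p

theorem stmt_6_general
    (T : ℝ → ℝ → ℝ) (n₀ : ℝ → ℝ → ℝ) (κ Rκ : ℝ)
    (onedr0 Xhat0 X0 : ℝ → ℝ → ℝ)
    (hT_int : ∀ p, Integrable (fun q => T p q))
    (hT_op : ∃ M, ∀ p, (∫ q, |T p q|) ≤ M)
    (hn_meas : Measurable (Function.uncurry n₀))
    (hn_nonneg : ∀ x p, 0 ≤ n₀ x p)
    (hn_bdd : ∃ C, ∀ x p, n₀ x p ≤ C)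
    (hsup_meas : Measurable (fun q => ⨆ x, n₀ x q))
    (hκ : κ = ⨆ p, ∫ q, |T p q| * ⨆ x, n₀ x q)
    (hR : (((∀ p q, 0 ≤ T p q) ∨ (∀ p q, T p q ≤ 0)) ∧ κ < 1 ∧ Rκ = 1 - κ) ∨
          (κ < 1 / 2 ∧ Rκ = (1 - 2 * κ) / (1 - κ)))
    (h1_meas : Measurable (Function.uncurry onedr0))
    (h1_bdd : ∃ C, ∀ y p, |onedr0 y p| ≤ C)
    (h1_eq : ∀ y p, onedr0 y p = 1 + ∫ q, T p q * (n₀ y q * onedr0 y q))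
    (hXhat0 : ∀ x p, Xhat0 x p = ∫ y in (0:ℝ)..x, onedr0 y p)
    (hX0 : ∀ p, Function.LeftInverse (fun xh => X0 xh p) (fun x => Xhat0 x p) ∧
           Function.RightInverse (fun xh => X0 xh p) (fun x => Xhat0 x p)) :
    (∀ p x y, y < x →
      Rκ ≤ (Xhat0 x p - Xhat0 y p) / (x - y) ∧
      (Xhat0 x p - Xhat0 y p) / (x - y) ≤ 1 / (1 - κ)) ∧
    (∀ p, StrictMono (fun x => Xhat0 x p)) ∧
    (∀ p, Function.Bijective (fun x => Xhat0 x p)) ∧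
    (∀ p xh yh, yh < xh →
      1 - κ ≤ (X0 xh p - X0 yh p) / (xh - yh) ∧
      (X0 xh p - X0 yh p) / (xh - yh) ≤ 1 / Rκ) := by
  have hK : ∀ y p, Integrable (fun q => T p q * n₀ y q) := fun y p =>
    have ⟨C, hC⟩ := hn_bdd
    (hT_int p).mul_bdd hn_meas.of_uncurry_left.aestronglyMeasurable
      (ae_of_all _ fun q => (abs_of_nonneg (hn_nonneg y q)).trans_le (hC y q))
  have hKκ : ∀ y p, ∫ q, |T p q * n₀ y q| ≤ κ :=
    hκ ▸ integral_abs_mul_le_iSup hT_int hT_op hn_nonneg hn_bdd hsup_meas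
  have hg_bdd : ∀ y, ∃ C, ∀ p, |onedr0 y p| ≤ C := fun y => h1_bdd.imp fun C hC => hC y
  have hdr : ∀ y, IsDressingOfOne volume (fun p q => T p q * n₀ y q) (onedr0 y) := by
    simpa only [IsDressingOfOne, mul_assoc] using h1_eq
  have hκ1 : κ < 1 := by rcases hR with ⟨-, h, -⟩ | ⟨h, -⟩ <;> linarith
  have hRκ : 0 < Rκ := by
    rcases hR with ⟨-, -, rfl⟩ | ⟨h, rfl⟩
    · linarith
    · exact div_pos (by linarith) (by linarith)
  have hlow : ∀ y p, Rκ ≤ onedr0 y p := fun y =>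
    le_dressing (hK y) (hKκ y) h1_meas.of_uncurry_left.aestronglyMeasurable (hg_bdd y) (hdr y) <|
      hR.imp_left <| And.imp_left <| Or.imp (fun hT p q => mul_nonneg (hT p q) (hn_nonneg y q))
        fun hT p q => mul_nonpos_of_nonpos_of_nonneg (hT p q) (hn_nonneg y q)
  have hup : ∀ y p, onedr0 y p ≤ 1 / (1 - κ) := fun y p =>
    (le_abs_self _).trans (abs_dressing_le (hK y) (hKκ y) hκ1 (hg_bdd y) (hdr y) p)
  have hslope : ∀ p x y, y < x →
      slope (Xhat0 · p) y x ∈ Icc Rκ (1 / (1 - κ)) := by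
    intro p x y hyx
    rw [show (Xhat0 · p) = fun x => ∫ t in (0:ℝ)..x, onedr0 t p from funext (hXhat0 · p)]
    exact slope_intervalIntegral_mem_Icc h1_meas.of_uncurry_right.aestronglyMeasurable
      (hlow · p) (hup · p) hyx
  refine ⟨by simpa only [slope_def_field, mem_Icc] using hslope,
    fun p => strictMono_of_le_slope hRκ fun x y h => (hslope p x y h).1,
    fun p => ⟨(hX0 p).1.injective, (hX0 p).2.surjective⟩, fun p xh yh h => ?_⟩
  simpa only [slope_def_field, mem_Icc, one_div, inv_inv] using
    slope_rightInverse_mem_Icc hRκ (hX0 p).2 (hslope p) h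

/-- Basic properties of `X̂₀(x,p) = ∫₀ˣ 1^dr₀(y,p) dy` (where `1^dr₀(y,·)`
is the dressing of `1` with respect to `n₀(y,·)`): for `x > y`,
`R(κ) ≤ (X̂₀(x,p) - X̂₀(y,p))/(x-y) ≤ 1/(1-κ)` where `R(κ) = 1-κ` in the fixed-sign case
and `R(κ) = (1-2κ)/(1-κ)` otherwise; hence `X̂₀(·,p)` is strictly increasing and a
bijection of ℝ, and its inverse `X₀(·,p)` satisfies
`1-κ ≤ (X₀(x̂,p)-X₀(ŷ,p))/(x̂-ŷ) ≤ 1/R(κ)` for `x̂ > ŷ`. -/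
theorem stmt_6
    (T : ℝ → ℝ → ℝ) (n₀ : ℝ → ℝ → ℝ) (κ Rκ : ℝ)
    (onedr0 Xhat0 X0 : ℝ → ℝ → ℝ)
    (hT_meas : Measurable (Function.uncurry T))
    (hT_int : ∀ p, Integrable (fun q => T p q))
    (hT_op : ∃ M, ∀ p, (∫ q, |T p q|) ≤ M)
    (hn_meas : Measurable (Function.uncurry n₀))
    (hn_nonneg : ∀ x p, 0 ≤ n₀ x p)
    (hn_bdd : ∃ C, ∀ x p, n₀ x p ≤ C)
    (hsup_meas : Measurable (fun q => ⨆ x, n₀ x q))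
    (hκ : κ = ⨆ p, ∫ q, |T p q| * ⨆ x, n₀ x q)
    (hR : (((∀ p q, 0 ≤ T p q) ∨ (∀ p q, T p q ≤ 0)) ∧ κ < 1 ∧ Rκ = 1 - κ) ∨
          (κ < 1 / 2 ∧ Rκ = (1 - 2 * κ) / (1 - κ)))
    (h1_meas : Measurable (Function.uncurry onedr0))
    (h1_bdd : ∃ C, ∀ y p, |onedr0 y p| ≤ C)
    (h1_eq : ∀ y p, onedr0 y p = 1 + ∫ q, T p q * (n₀ y q * onedr0 y q))
    (hXhat0 : ∀ x p, Xhat0 x p = ∫ y in (0:ℝ)..x, onedr0 y p)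
    (hX0 : ∀ p, Function.LeftInverse (fun xh => X0 xh p) (fun x => Xhat0 x p) ∧
           Function.RightInverse (fun xh => X0 xh p) (fun x => Xhat0 x p)) :
    (∀ p x y, y < x →
      Rκ ≤ (Xhat0 x p - Xhat0 y p) / (x - y) ∧
      (Xhat0 x p - Xhat0 y p) / (x - y) ≤ 1 / (1 - κ)) ∧
    (∀ p, StrictMono (fun x => Xhat0 x p)) ∧
    (∀ p, Function.Bijective (fun x => Xhat0 x p)) ∧
    (∀ p xh yh, yh < xh →
      1 - κ ≤ (X0 xh p - X0 yh p) / (xh - yh) ∧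
      (X0 xh p - X0 yh p) / (xh - yh) ≤ 1 / Rκ) :=
  stmt_6_general T n₀ κ Rκ onedr0 Xhat0 X0 hT_int hT_op hn_meas hn_nonneg hn_bdd hsup_meas hκ hR
    h1_meas h1_bdd h1_eq hXhat0 hX0
end

section
/- Fix t, x ∈ ℝ and define the map G_{t,x} on B(ℝ) by G_{t,x}[f](p) = x + ∫ T(p,q) N̂₀(f(q) − v(q)t, q) dq. Under the standing assumptions (including sup_{x,p} |v(p)| n₀(x,p) < ∞), G_{t,x} maps B(ℝ) into B(ℝ) and is a contraction with contraction constant κ₀ := sup_p ∫|T(p,q)| sup_x n₀(x,q) dq < 1: ‖G_{t,x}[f] − G_{t,x}[f']‖_∞ ≤ κ₀ ‖f − f'‖_∞. Consequently, by the Banach fixed-point theorem, for every t,x there is a unique X̂(t,x,·) ∈ B(ℝ) with X̂(t,x,p) = x + ∫ T(p,q) N̂₀(X̂(t,x,q) − v(q)t, q) dq for all p. -/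
/-!
The integrand `N0 (f q - v q * t) q` vanishes where its first argument does and is Lipschitz in
it with constant `⨆ x, n₀ x q`; integrating against `|T p q|` shows that `G_{t,x}` preserves
bounded measurable functions and is a `κ₀`-contraction for the sup distance. Bounded measurable
functions form a closed subset of the complete extended metric space `ℝ →ᵤ ℝ`, so the Banach
fixed point theorem gives the unique fixed point.
-/

open MeasureTheory Filter Topology Function
open scoped NNReal ENNReal UniformConvergence

section UniformFun

variable {α : Type*}

lemma UniformFun.abs_sub_le_toReal_edist (f g : α → ℝ) (p : α)
    (h : edist (ofFun f) (ofFun g) ≠ ∞) :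
    |f p - g p| ≤ (edist (ofFun f) (ofFun g)).toReal := by
  rw [← ENNReal.ofReal_le_iff_le_toReal h, ← Real.dist_eq, ← edist_dist]
  exact edist_eval_le (f := ofFun f) (g := ofFun g)

lemma UniformFun.edist_ofFun_le_of_forall_abs_sub_le {f g : α → ℝ} {C : ℝ}
    (h : ∀ p, |f p - g p| ≤ C) : edist (ofFun f) (ofFun g) ≤ ENNReal.ofReal C :=
  edist_le.2 fun p => by
    rw [edist_dist, Real.dist_eq]; exact ENNReal.ofReal_le_ofReal (h p)

lemma UniformFun.edist_ofFun_ne_top {f g : α → ℝ} (hf : ∃ C, ∀ p, |f p| ≤ C)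
    (hg : ∃ C, ∀ p, |g p| ≤ C) : edist (ofFun f) (ofFun g) ≠ ∞ := by
  obtain ⟨C, hC⟩ := hf
  obtain ⟨C', hC'⟩ := hg
  exact ne_top_of_le_ne_top ENNReal.ofReal_ne_top <| edist_ofFun_le_of_forall_abs_sub_le
    fun p => (abs_sub _ _).trans (add_le_add (hC p) (hC' p))

end UniformFun

section BoundedMeasurable

variable {α : Type*} [MeasurableSpace α]

def IsBoundedMeasurable (f : α → ℝ) : Prop :=
  Measurable f ∧ ∃ C, ∀ p, |f p| ≤ C

lemma isClosed_setOf_isBoundedMeasurable :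
    IsClosed {u : α →ᵤ ℝ | IsBoundedMeasurable (UniformFun.toFun u)} := by
  refine IsSeqClosed.isClosed fun u f hu hlim => ?_
  have hunif := UniformFun.tendsto_iff_tendstoUniformly.1 hlim
  refine ⟨measurable_of_tendsto_metrizable (fun n => (hu n).1)
    (tendsto_pi_nhds.2 fun p => hunif.tendsto_at p), ?_⟩
  obtain ⟨n, hn⟩ := (Metric.tendstoUniformly_iff.1 hunif 1 one_pos).exists
  obtain ⟨C, hC⟩ := (hu n).2
  refine ⟨C + 1, fun p => ?_⟩
  have h : |UniformFun.toFun f p - UniformFun.toFun (u n) p| < 1 := by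
    simpa only [Real.dist_eq, comp_apply] using hn p
  linarith [abs_sub_abs_le_abs_sub (UniformFun.toFun f p) (UniformFun.toFun (u n) p), hC p]

lemma IsBoundedMeasurable.integrable_mul {μ : Measure α} {k g : α → ℝ} (hk : Integrable k μ)
    (hg : IsBoundedMeasurable g) : Integrable (fun q => k q * g q) μ := by
  obtain ⟨hg_meas, C, hC⟩ := hg
  exact hk.mul_bdd hg_meas.aestronglyMeasurable (ae_of_all _ hC)

theorem existsUnique_isBoundedMeasurable_isFixedPt (G : (α → ℝ) → α → ℝ) {K : ℝ≥0} (hK : K < 1)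
    (hG : ∀ f, IsBoundedMeasurable f → IsBoundedMeasurable (G f))
    (hG_contr : ∀ f f', IsBoundedMeasurable f → IsBoundedMeasurable f' →
      ∀ D, (∀ p, |f p - f' p| ≤ D) → ∀ p, |G f p - G f' p| ≤ K * D) :
    ∃! X, IsBoundedMeasurable X ∧ G X = X := by
  set F : (α →ᵤ ℝ) → (α →ᵤ ℝ) := UniformFun.ofFun ∘ G ∘ UniformFun.toFun
  set s := {u : α →ᵤ ℝ | IsBoundedMeasurable (UniformFun.toFun u)}
  have hFs : Set.MapsTo F s s := fun u hu => hG _ hu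
  have hF : ContractingWith K (hFs.restrict F s s) := by
    refine ⟨hK, fun u u' => ?_⟩
    have hfin := UniformFun.edist_ofFun_ne_top u.2.2 u'.2.2
    rw [Subtype.edist_eq, Subtype.edist_eq]
    refine (UniformFun.edist_ofFun_le_of_forall_abs_sub_le
      (hG_contr _ _ u.2 u'.2 _ (UniformFun.abs_sub_le_toReal_edist _ _ · hfin))).trans_eq ?_
    rw [ENNReal.ofReal_mul K.coe_nonneg, ENNReal.ofReal_coe_nnreal]
    exact congrArg _ (ENNReal.ofReal_toReal hfin)
  have h0 : IsBoundedMeasurable (0 : α → ℝ) := ⟨measurable_const, 0, by simp⟩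
  obtain ⟨X, hXs, hXfix, -⟩ := hF.exists_fixedPoint' isClosed_setOf_isBoundedMeasurable.isComplete
    hFs (x := UniformFun.ofFun 0) h0 (UniformFun.edist_ofFun_ne_top h0.2 (hG 0 h0).2)
  refine ⟨UniformFun.toFun X, ⟨hXs, hXfix⟩, fun Y ⟨hY, hYfix⟩ => ?_⟩
  have := hF.eq_or_edist_eq_top_of_fixedPoints (x := ⟨UniformFun.ofFun Y, hY⟩) (y := ⟨X, hXs⟩)
    (Subtype.ext (congrArg UniformFun.ofFun hYfix)) (Subtype.ext hXfix)
  exact congrArg (UniformFun.toFun ∘ Subtype.val)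
    (this.resolve_right (UniformFun.edist_ofFun_ne_top hY.2 hXs.2))

end BoundedMeasurable

lemma abs_integral_mul_le_integral_abs_mul {β : Type*} [MeasurableSpace β] {μ : Measure β}
    {f g w : β → ℝ} (hfw : Integrable (fun x => |f x| * w x) μ) (hg : ∀ x, |g x| ≤ w x) :
    |∫ x, f x * g x ∂μ| ≤ ∫ x, |f x| * w x ∂μ :=
  abs_integral_le_integral_abs.trans <|
    integral_mono_of_nonneg (ae_of_all _ fun _ => abs_nonneg _) hfw <| ae_of_all _ fun x => by
      simpa only [abs_mul] using mul_le_mul_of_nonneg_left (hg x) (abs_nonneg (f x))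

lemma bddAbove_range_integral_abs_mul {β : Type*} [MeasurableSpace β] [Nonempty β]
    {μ : Measure β} {k : ℝ → β → ℝ} {w : β → ℝ} {M C : ℝ} (hk : ∀ p, Integrable (k p) μ)
    (hM : ∀ p, ∫ q, |k p q| ∂μ ≤ M) (hw0 : ∀ q, 0 ≤ w q) (hwC : ∀ q, w q ≤ C) :
    BddAbove (Set.range fun p => ∫ q, |k p q| * w q ∂μ) := by
  refine ⟨M * C, ?_⟩
  rintro _ ⟨p, rfl⟩
  calc ∫ q, |k p q| * w q ∂μ ≤ ∫ q, |k p q| * C ∂μ :=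
        integral_mono_of_nonneg (ae_of_all _ fun q => mul_nonneg (abs_nonneg _) (hw0 q))
          ((hk p).abs.mul_const C)
          (ae_of_all _ fun q => mul_le_mul_of_nonneg_left (hwC q) (abs_nonneg _))
    _ ≤ M * C := by
        rw [integral_mul_const]
        exact mul_le_mul_of_nonneg_right (hM p) ((hw0 (Classical.arbitrary β)).trans (hwC _))

noncomputable def characteristicMap (T N0 : ℝ → ℝ → ℝ) (v : ℝ → ℝ) (t x : ℝ) (f : ℝ → ℝ)
    (p : ℝ) : ℝ :=
  x + ∫ q, T p q * N0 (f q - v q * t) q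

section CharacteristicMap

variable {T N0 : ℝ → ℝ → ℝ} {v s f f' : ℝ → ℝ} {t x : ℝ}

lemma abs_seed_comp_le (hN0_zero : ∀ q, N0 0 q = 0)
    (hN0_lip : ∀ q a b, |N0 a q - N0 b q| ≤ s q * |a - b|) {C Cv Cf : ℝ}
    (hs0 : ∀ q, 0 ≤ s q) (hsC : ∀ q, s q ≤ C) (hvs : ∀ q, |v q| * s q ≤ Cv)
    (hf : ∀ q, |f q| ≤ Cf) (q : ℝ) :
    |N0 (f q - v q * t) q| ≤ C * Cf + Cv * |t| :=
  calc |N0 (f q - v q * t) q| ≤ s q * |f q - v q * t| := by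
        simpa [hN0_zero] using hN0_lip q (f q - v q * t) 0
    _ ≤ s q * (|f q| + |v q| * |t|) := by
        grw [abs_sub, abs_mul]
        exact hs0 q
    _ = s q * |f q| + |v q| * s q * |t| := by ring
    _ ≤ C * Cf + Cv * |t| :=
        add_le_add (mul_le_mul (hsC q) (hf q) (abs_nonneg _) ((hs0 q).trans (hsC q)))
          (mul_le_mul_of_nonneg_right (hvs q) (abs_nonneg t))

lemma isBoundedMeasurable_seed_comp (hN0 : Measurable (uncurry N0)) (hv : Measurable v)
    (hN0_zero : ∀ q, N0 0 q = 0) (hN0_lip : ∀ q a b, |N0 a q - N0 b q| ≤ s q * |a - b|)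
    {C Cv : ℝ} (hs0 : ∀ q, 0 ≤ s q) (hsC : ∀ q, s q ≤ C) (hvs : ∀ q, |v q| * s q ≤ Cv)
    (hf : IsBoundedMeasurable f) :
    IsBoundedMeasurable fun q => N0 (f q - v q * t) q := by
  obtain ⟨hf_meas, Cf, hCf⟩ := hf
  exact ⟨hN0.comp ((hf_meas.sub (hv.mul_const t)).prodMk measurable_id),
    _, abs_seed_comp_le hN0_zero hN0_lip hs0 hsC hvs hCf⟩

lemma isBoundedMeasurable_characteristicMap (hT : Measurable (uncurry T))
    (hT_int : ∀ p, Integrable (T p)) {M : ℝ} (hM : ∀ p, ∫ q, |T p q| ≤ M)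
    (hg : IsBoundedMeasurable fun q => N0 (f q - v q * t) q) :
    IsBoundedMeasurable (characteristicMap T N0 v t x f) := by
  obtain ⟨hg_meas, B, hB⟩ := hg
  refine ⟨measurable_const.add ?_, |x| + M * B, fun p => ?_⟩
  · exact (hT.mul (hg_meas.comp measurable_snd)).stronglyMeasurable
      |>.integral_prod_right'.measurable
  · have hB0 : 0 ≤ B := (abs_nonneg _).trans (hB 0)
    calc |characteristicMap T N0 v t x f p|
        ≤ |x| + ∫ q, |T p q| * B := (abs_add_le _ _).trans <| add_le_add_right
          (abs_integral_mul_le_integral_abs_mul ((hT_int p).abs.mul_const B) hB) _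
      _ ≤ |x| + M * B := by
          rw [integral_mul_const]; grw [hM p]

lemma abs_characteristicMap_sub_le {p κ D : ℝ} (hT_int : Integrable (T p))
    (hTs : Integrable fun q => |T p q| * s q) (hκ : ∫ q, |T p q| * s q ≤ κ)
    (hs0 : ∀ q, 0 ≤ s q) (hN0_lip : ∀ q a b, |N0 a q - N0 b q| ≤ s q * |a - b|)
    (hg : IsBoundedMeasurable fun q => N0 (f q - v q * t) q)
    (hg' : IsBoundedMeasurable fun q => N0 (f' q - v q * t) q) (hD : ∀ q, |f q - f' q| ≤ D) :
    |characteristicMap T N0 v t x f p - characteristicMap T N0 v t x f' p| ≤ κ * D := by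
  have hD0 : 0 ≤ D := (abs_nonneg _).trans (hD 0)
  rw [characteristicMap, characteristicMap, add_sub_add_left_eq_sub,
    ← integral_sub (hg.integrable_mul hT_int) (hg'.integrable_mul hT_int)]
  simp_rw [← mul_sub]
  calc _ ≤ ∫ q, |T p q| * (s q * D) := by
        refine abs_integral_mul_le_integral_abs_mul
          (by simpa only [mul_assoc] using hTs.mul_const D) fun q => ?_
        grw [hN0_lip, sub_sub_sub_cancel_right, hD q]
        exact hs0 q
    _ = (∫ q, |T p q| * s q) * D := by simp_rw [← mul_assoc]; exact integral_mul_const _ _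
    _ ≤ κ * D := by grw [hκ]

end CharacteristicMap

theorem stmt_8_general
    (T : ℝ → ℝ → ℝ) (n₀ : ℝ → ℝ → ℝ) (v : ℝ → ℝ) (N0 : ℝ → ℝ → ℝ) (κ₀ Cv : ℝ)
    (hT_meas : Measurable (Function.uncurry T))
    (hT_int : ∀ p, Integrable (fun q => T p q))
    (hT_op : ∃ M, ∀ p, (∫ q, |T p q|) ≤ M)
    (hn_nonneg : ∀ x p, 0 ≤ n₀ x p)
    (hn_bdd : ∃ C, ∀ x p, n₀ x p ≤ C)
    (hsup_meas : Measurable (fun q => ⨆ x, n₀ x q))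
    (hv_meas : Measurable v)
    (hCv : ∀ x p, |v p| * n₀ x p ≤ Cv)
    (hN0_meas : Measurable (Function.uncurry N0))
    (hN0_zero : ∀ q, N0 0 q = 0)
    (hN0_lip : ∀ q a b, |N0 a q - N0 b q| ≤ (⨆ x, n₀ x q) * |a - b|)
    (hκ₀ : κ₀ = ⨆ p, ∫ q, |T p q| * ⨆ x, n₀ x q)
    (hκ₀_lt : κ₀ < 1) :
    -- G_{t,x} maps B(ℝ) into B(ℝ):
    (∀ t x : ℝ, ∀ f : ℝ → ℝ, Measurable f → (∃ C, ∀ q, |f q| ≤ C) →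
      ∃ C, ∀ p, |x + ∫ q, T p q * N0 (f q - v q * t) q| ≤ C) ∧
    -- G_{t,x} is a contraction with constant κ₀:
    (∀ t x : ℝ, ∀ f f' : ℝ → ℝ, ∀ D : ℝ,
      Measurable f → Measurable f' →
      (∃ C, ∀ q, |f q| ≤ C) → (∃ C, ∀ q, |f' q| ≤ C) →
      (∀ q, |f q - f' q| ≤ D) →
      ∀ p, |(x + ∫ q, T p q * N0 (f q - v q * t) q)
             - (x + ∫ q, T p q * N0 (f' q - v q * t) q)| ≤ κ₀ * D) ∧
    -- existence and uniqueness of the fixed point: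
    (∀ t x : ℝ, ∃ Xh : ℝ → ℝ, Measurable Xh ∧ (∃ C, ∀ p, |Xh p| ≤ C) ∧
      (∀ p, Xh p = x + ∫ q, T p q * N0 (Xh q - v q * t) q) ∧
      (∀ Y : ℝ → ℝ, Measurable Y → (∃ C, ∀ p, |Y p| ≤ C) →
        (∀ p, Y p = x + ∫ q, T p q * N0 (Y q - v q * t) q) → Y = Xh)) := by
  obtain ⟨M, hM⟩ := hT_op
  obtain ⟨C, hC⟩ := hn_bdd
  set s := fun q => ⨆ x, n₀ x q
  have hs0 q : 0 ≤ s q := Real.iSup_nonneg (hn_nonneg · q)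
  have hsC q : s q ≤ C := ciSup_le (hC · q)
  have hvs q : |v q| * s q ≤ Cv := by
    rw [Real.mul_iSup_of_nonneg (abs_nonneg _)]; exact ciSup_le (hCv · q)
  have hTs p : Integrable fun q => |T p q| * s q :=
    (hT_int p).abs.mul_bdd hsup_meas.aestronglyMeasurable
      (ae_of_all _ fun q => (abs_of_nonneg (hs0 q)).trans_le (hsC q))
  have hκ p : ∫ q, |T p q| * s q ≤ κ₀ :=
    hκ₀ ▸ le_ciSup (bddAbove_range_integral_abs_mul hT_int hM hs0 hsC) p
  have hseed t f (hf : IsBoundedMeasurable f) :=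
    isBoundedMeasurable_seed_comp (t := t) hN0_meas hv_meas hN0_zero hN0_lip hs0 hsC hvs hf
  have hG t x f (hf : IsBoundedMeasurable f) :
      IsBoundedMeasurable (characteristicMap T N0 v t x f) :=
    isBoundedMeasurable_characteristicMap hT_meas hT_int hM (hseed t f hf)
  have hG_contr t x f f' (hf : IsBoundedMeasurable f) (hf' : IsBoundedMeasurable f') D
      (hD : ∀ q, |f q - f' q| ≤ D) p :
      |characteristicMap T N0 v t x f p - characteristicMap T N0 v t x f' p| ≤ κ₀ * D :=
    abs_characteristicMap_sub_le (hT_int p) (hTs p) (hκ p) hs0 hN0_lip (hseed t f hf)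
      (hseed t f' hf') hD
  refine ⟨fun t x f hf hfC => (hG t x f ⟨hf, hfC⟩).2,
    fun t x f f' D hf hf' hfC hf'C => hG_contr t x f f' ⟨hf, hfC⟩ ⟨hf', hf'C⟩ D, fun t x => ?_⟩
  have hκ₀0 : 0 ≤ κ₀ := (integral_nonneg fun q => mul_nonneg (abs_nonneg _) (hs0 q)).trans (hκ 0)
  obtain ⟨X, ⟨⟨hX, hXC⟩, hXfix⟩, hX_unique⟩ :=
    existsUnique_isBoundedMeasurable_isFixedPt (characteristicMap T N0 v t x) (K := ⟨κ₀, hκ₀0⟩)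
      hκ₀_lt (hG t x) (hG_contr t x)
  exact ⟨X, hX, hXC, fun p => (congrFun hXfix p).symm, fun Y hY hYC hYfix =>
    hX_unique Y ⟨⟨hY, hYC⟩, funext fun p => (hYfix p).symm⟩⟩

/-- The map `G_{t,x}[f](p) = x + ∫ T(p,q) N̂₀(f(q) - v(q)t, q) dq` maps
`B(ℝ)` to `B(ℝ)` and is a contraction with constant
`κ₀ = sup_p ∫|T(p,q)| sup_x n₀(x,q) dq < 1`; consequently, by the Banach fixed-point
theorem, for every `t,x` there is a unique bounded measurable `X̂(t,x,·)` with
`X̂(t,x,p) = x + ∫ T(p,q) N̂₀(X̂(t,x,q) - v(q)t, q) dq` for all `p`. -/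
theorem stmt_8
    (T : ℝ → ℝ → ℝ) (n₀ : ℝ → ℝ → ℝ) (v : ℝ → ℝ) (N0 : ℝ → ℝ → ℝ) (κ₀ Cv : ℝ)
    (hT_meas : Measurable (Function.uncurry T))
    (hT_int : ∀ p, Integrable (fun q => T p q))
    (hT_op : ∃ M, ∀ p, (∫ q, |T p q|) ≤ M)
    (hn_meas : Measurable (Function.uncurry n₀))
    (hn_nonneg : ∀ x p, 0 ≤ n₀ x p)
    (hn_bdd : ∃ C, ∀ x p, n₀ x p ≤ C)
    (hsup_meas : Measurable (fun q => ⨆ x, n₀ x q))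
    (hv_meas : Measurable v)
    (hCv : ∀ x p, |v p| * n₀ x p ≤ Cv)
    (hN0_meas : Measurable (Function.uncurry N0))
    (hN0_zero : ∀ q, N0 0 q = 0)
    (hN0_lip : ∀ q a b, |N0 a q - N0 b q| ≤ (⨆ x, n₀ x q) * |a - b|)
    (hκ₀ : κ₀ = ⨆ p, ∫ q, |T p q| * ⨆ x, n₀ x q)
    (hκ₀_lt : κ₀ < 1) :
    -- G_{t,x} maps B(ℝ) into B(ℝ):
    (∀ t x : ℝ, ∀ f : ℝ → ℝ, Measurable f → (∃ C, ∀ q, |f q| ≤ C) →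
      ∃ C, ∀ p, |x + ∫ q, T p q * N0 (f q - v q * t) q| ≤ C) ∧
    -- G_{t,x} is a contraction with constant κ₀:
    (∀ t x : ℝ, ∀ f f' : ℝ → ℝ, ∀ D : ℝ,
      Measurable f → Measurable f' →
      (∃ C, ∀ q, |f q| ≤ C) → (∃ C, ∀ q, |f' q| ≤ C) →
      (∀ q, |f q - f' q| ≤ D) →
      ∀ p, |(x + ∫ q, T p q * N0 (f q - v q * t) q)
             - (x + ∫ q, T p q * N0 (f' q - v q * t) q)| ≤ κ₀ * D) ∧
    -- existence and uniqueness of the fixed point: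
    (∀ t x : ℝ, ∃ Xh : ℝ → ℝ, Measurable Xh ∧ (∃ C, ∀ p, |Xh p| ≤ C) ∧
      (∀ p, Xh p = x + ∫ q, T p q * N0 (Xh q - v q * t) q) ∧
      (∀ Y : ℝ → ℝ, Measurable Y → (∃ C, ∀ p, |Y p| ≤ C) →
        (∀ p, Y p = x + ∫ q, T p q * N0 (Y q - v q * t) q) → Y = Xh)) :=
  stmt_8_general T n₀ v N0 κ₀ Cv hT_meas hT_int hT_op hn_nonneg hn_bdd hsup_meas hv_meas hCv
    hN0_meas hN0_zero hN0_lip hκ₀ hκ₀_lt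
end

section
/- Conservation of generalized entropies: under the standing assumptions, suppose n solves the GHD equation via the fixed-point construction, so that n(t,x,p) = n₀(X₀(X̂(t,x,p)−v(p)t,p),p) and ∂̌X̂(t,x,p)/∂̌x = 1^dr(t,x,p). Let f : ℝ → ℝ be such that S_p[f](0) = (1/2π)∫ f(n(0,x,p)) 1^dr(0,x,p) dx exists (absolutely convergent) for a fixed p. Then for every t, S_p[f](t) = (1/2π)∫ f(n(t,x,p)) 1^dr(t,x,p) dx exists and equals S_p[f](0). -/
/-!
Substitute `x̂ = X̂(t,x,p) - v(p) t`. The map `x ↦ x̂` is an increasing bijection of `ℝ` and an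
indefinite integral of `1^dr(t,·,p)`, so `1^dr ≥ 0` a.e. (Lebesgue differentiation) and the
push-forward of `1^dr(t,x,p) dx` under it is Lebesgue measure, as both give `Ioc` the same mass.
Hence `∫ f(n(t,x,p)) 1^dr(t,x,p) dx = ∫ f(n₀(X₀(ŷ,p),p)) dŷ`, with integrability on both sides
equivalent, and the right-hand side does not depend on `t`.
-/

open MeasureTheory Set Function

section IndefiniteIntegral

variable {F D : ℝ → ℝ}

theorem StrictMono.intervalIntegrable_of_sub_eq_integral (hF : StrictMono F)
    (hFD : ∀ x x', F x - F x' = ∫ y in x'..x, D y) (a b : ℝ) :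
    IntervalIntegrable D volume a b := by
  -- otherwise `∫ y in a..b, D y` takes the junk value `0`, forcing `F a = F b`
  by_contra hD
  rcases eq_or_ne a b with rfl | hab
  · exact hD IntervalIntegrable.refl
  · have hFab := hFD b a
    rw [intervalIntegral.integral_undef hD, sub_eq_zero] at hFab
    exact hab (hF.injective hFab).symm

theorem StrictMono.locallyIntegrable_of_sub_eq_integral (hF : StrictMono F)
    (hFD : ∀ x x', F x - F x' = ∫ y in x'..x, D y) : LocallyIntegrable D volume := fun x =>
  ⟨Icc (x - 1) (x + 1), Icc_mem_nhds (by linarith) (by linarith),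
    (intervalIntegrable_iff_integrableOn_Icc_of_le (by linarith)).1
      (hF.intervalIntegrable_of_sub_eq_integral hFD _ _)⟩

theorem Monotone.ae_nonneg_of_sub_eq_integral (hF : Monotone F) (hD : LocallyIntegrable D volume)
    (hFD : ∀ x x', F x - F x' = ∫ y in x'..x, D y) : ∀ᵐ x, 0 ≤ D x := by
  have hF_eq : F = fun y => F 0 + ∫ t in 0..y, D t := funext fun y => by rw [← hFD y 0]; ring
  filter_upwards [LocallyIntegrable.ae_hasDerivAt_integral hD] with x hx
  have hFx : HasDerivAt F (D x) x := hF_eq ▸ (hx 0).const_add (F 0)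
  exact hFx.nonneg_of_monotone hF

theorem StrictMono.map_withDensity_of_sub_eq_integral (hF : StrictMono F) (hFs : Surjective F)
    (hFD : ∀ x x', F x - F x' = ∫ y in x'..x, D y) :
    (volume.withDensity fun x => ENNReal.ofReal (D x)).map F = volume := by
  have hD := hF.locallyIntegrable_of_sub_eq_integral hFD
  have hD_nonneg := hF.monotone.ae_nonneg_of_sub_eq_integral hD hFD
  refine (Measure.ext_of_Ioc _ _ fun a b hab => ?_).symm
  obtain ⟨⟨a, rfl⟩, ⟨b, rfl⟩⟩ := And.intro (hFs a) (hFs b)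
  have hab' : a ≤ b := (hF.lt_iff_lt.1 hab).le
  have hpre : F ⁻¹' Ioc (F a) (F b) = Ioc a b := (OrderEmbedding.ofStrictMono F hF).preimage_Ioc a b
  rw [Measure.map_apply hF.monotone.measurable measurableSet_Ioc, hpre,
    withDensity_apply _ measurableSet_Ioc,
    ← ofReal_integral_eq_lintegral_ofReal
      ((intervalIntegrable_iff_integrableOn_Ioc_of_le hab').1
        (hF.intervalIntegrable_of_sub_eq_integral hFD a b)) (ae_restrict_of_ae hD_nonneg),
    ← intervalIntegral.integral_of_le hab', ← hFD, Real.volume_Ioc]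

theorem StrictMono.integrable_comp_mul_iff_of_sub_eq_integral (hF : StrictMono F)
    (hFs : Surjective F) (hFD : ∀ x x', F x - F x' = ∫ y in x'..x, D y) (h : ℝ → ℝ) :
    Integrable (fun x => h (F x) * D x) ↔ Integrable h := by
  have hD := hF.locallyIntegrable_of_sub_eq_integral hFD
  have hemb : MeasurableEmbedding F :=
    (hF.orderIsoOfSurjective F hFs).toHomeomorph.measurableEmbedding
  conv_rhs => rw [← hF.map_withDensity_of_sub_eq_integral hFs hFD, hemb.integrable_map_iff]
  refine (integrable_withDensity_iff_integrable_smul₀'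
    hD.aestronglyMeasurable.aemeasurable.ennreal_ofReal
    (ae_of_all _ fun _ => ENNReal.ofReal_lt_top)).trans (integrable_congr ?_) |>.symm
  filter_upwards [hF.monotone.ae_nonneg_of_sub_eq_integral hD hFD] with x hx
  rw [ENNReal.toReal_ofReal hx, smul_eq_mul, mul_comm, comp_apply]

theorem StrictMono.integral_comp_mul_of_sub_eq_integral (hF : StrictMono F)
    (hFs : Surjective F) (hFD : ∀ x x', F x - F x' = ∫ y in x'..x, D y) (h : ℝ → ℝ) :
    ∫ x, h (F x) * D x = ∫ y, h y := by
  have hD := hF.locallyIntegrable_of_sub_eq_integral hFD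
  have hemb : MeasurableEmbedding F :=
    (hF.orderIsoOfSurjective F hFs).toHomeomorph.measurableEmbedding
  conv_rhs => rw [← hF.map_withDensity_of_sub_eq_integral hFs hFD, hemb.integral_map,
    integral_withDensity_eq_integral_toReal_smul₀
      hD.aestronglyMeasurable.aemeasurable.ennreal_ofReal
      (ae_of_all _ fun _ => ENNReal.ofReal_lt_top)]
  refine integral_congr_ae ?_ |>.symm
  filter_upwards [hF.monotone.ae_nonneg_of_sub_eq_integral hD hFD] with x hx
  rw [ENNReal.toReal_ofReal hx, smul_eq_mul, mul_comm]

end IndefiniteIntegral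

theorem stmt_18_general
    (n₀ : ℝ → ℝ → ℝ) (v : ℝ → ℝ) (X0 : ℝ → ℝ → ℝ)
    (Xhat onedr : ℝ → ℝ → ℝ → ℝ) (f : ℝ → ℝ) (p : ℝ)
    -- ∂̌X̂/∂̌x = 1^dr, in integrated form:
    (hXder : ∀ t x x' p', Xhat t x p' - Xhat t x' p' = ∫ y in x'..x, onedr t y p')
    -- X̂(t,·,p) is a (strictly increasing) homeomorphism of ℝ:
    (hXbij : ∀ t p', Function.Bijective fun x => Xhat t x p')
    (hXmono : ∀ t p', StrictMono fun x => Xhat t x p')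
    -- S_p[f](0) exists:
    (hint0 : Integrable fun x => f (n₀ (X0 (Xhat 0 x p - v p * 0) p) p) * onedr 0 x p) :
    ∀ t, (Integrable fun x => f (n₀ (X0 (Xhat t x p - v p * t) p) p) * onedr t x p) ∧
      (1 / (2 * Real.pi)) * (∫ x, f (n₀ (X0 (Xhat t x p - v p * t) p) p) * onedr t x p)
        = (1 / (2 * Real.pi)) *
            ∫ x, f (n₀ (X0 (Xhat 0 x p - v p * 0) p) p) * onedr 0 x p := by
  set h : ℝ → ℝ := fun y => f (n₀ (X0 y p) p)
  have change_of_variables (t : ℝ) :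
      (Integrable (fun x => h (Xhat t x p - v p * t) * onedr t x p) ↔ Integrable h) ∧
        ∫ x, h (Xhat t x p - v p * t) * onedr t x p = ∫ y, h y := by
    have hF : StrictMono fun x => Xhat t x p - v p * t := fun a b hab =>
      sub_lt_sub_right (hXmono t p hab) _
    have hFs : Surjective fun x => Xhat t x p - v p * t := fun y => by
      obtain ⟨x, hx⟩ := (hXbij t p).2 (y + v p * t)
      exact ⟨x, by simp only [hx, add_sub_cancel_right]⟩
    have hFD (x x' : ℝ) : (Xhat t x p - v p * t) - (Xhat t x' p - v p * t) =
        ∫ y in x'..x, onedr t y p := by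
      rw [sub_sub_sub_cancel_right, hXder]
    exact ⟨hF.integrable_comp_mul_iff_of_sub_eq_integral hFs hFD h,
      hF.integral_comp_mul_of_sub_eq_integral hFs hFD h⟩
  intro t
  exact ⟨(change_of_variables t).1.2 ((change_of_variables 0).1.1 hint0),
    by rw [(change_of_variables t).2, (change_of_variables 0).2]⟩

/-- Conservation of generalized entropies. With
`n(t,x,p) = n₀(X₀(X̂(t,x,p) - v(p)t, p), p)` the occupation function obtained from the
fixed-point construction, `1^dr(t,x,·)` the associated dressing of the constant `1`
(with `∂̌X̂/∂̌x = 1^dr` in integrated form), and `X̂(t,·,p)` a homeomorphism of ℝ: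
if `S_p[f](0) = (1/2π)∫ f(n(0,x,p)) 1^dr(0,x,p) dx` exists for some `f : ℝ → ℝ` and a
fixed `p`, then for every `t` the integral `S_p[f](t)` exists and equals `S_p[f](0)`. -/
theorem stmt_18
    (T : ℝ → ℝ → ℝ) (n₀ : ℝ → ℝ → ℝ) (v : ℝ → ℝ) (X0 : ℝ → ℝ → ℝ)
    (Xhat onedr : ℝ → ℝ → ℝ → ℝ) (κ₀ Cv : ℝ) (f : ℝ → ℝ) (p : ℝ)
    (hT_meas : Measurable (Function.uncurry T))
    (hT_int : ∀ p', Integrable (fun q => T p' q))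
    (hT_op : ∃ M, ∀ p', (∫ q, |T p' q|) ≤ M)
    (hn_meas : Measurable (Function.uncurry n₀))
    (hn_nonneg : ∀ x p', 0 ≤ n₀ x p')
    (hn_bdd : ∃ C, ∀ x p', n₀ x p' ≤ C)
    (hsup_meas : Measurable (fun q => ⨆ x, n₀ x q))
    (hκ₀ : ∀ p', (∫ q, |T p' q| * ⨆ x, n₀ x q) ≤ κ₀)
    (hA : (((∀ p' q, 0 ≤ T p' q) ∨ (∀ p' q, T p' q ≤ 0)) ∧ κ₀ < 1) ∨ κ₀ < 1 / 2)
    (hv_meas : Measurable v)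
    (hCv : ∀ x p', |v p'| * n₀ x p' ≤ Cv)
    (hX0_meas : Measurable (Function.uncurry X0))
    (hXhat_meas : ∀ t x, Measurable fun p' => Xhat t x p')
    (hXhat_bdd : ∀ t x, ∃ C, ∀ p', |Xhat t x p'| ≤ C)
    (h1_meas : ∀ t p', Measurable fun x => onedr t x p')
    (h1_bdd : ∃ C, ∀ t x p', |onedr t x p'| ≤ C)
    (h1_eq : ∀ t x p', onedr t x p'
      = 1 + ∫ q, T p' q * (n₀ (X0 (Xhat t x q - v q * t) q) q * onedr t x q))
    -- ∂̌X̂/∂̌x = 1^dr, in integrated form: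
    (hXder : ∀ t x x' p', Xhat t x p' - Xhat t x' p' = ∫ y in x'..x, onedr t y p')
    -- X̂(t,·,p) is a (strictly increasing) homeomorphism of ℝ:
    (hXbij : ∀ t p', Function.Bijective fun x => Xhat t x p')
    (hXmono : ∀ t p', StrictMono fun x => Xhat t x p')
    -- S_p[f](0) exists:
    (hint0 : Integrable fun x => f (n₀ (X0 (Xhat 0 x p - v p * 0) p) p) * onedr 0 x p) :
    ∀ t, (Integrable fun x => f (n₀ (X0 (Xhat t x p - v p * t) p) p) * onedr t x p) ∧
      (1 / (2 * Real.pi)) * (∫ x, f (n₀ (X0 (Xhat t x p - v p * t) p) p) * onedr t x p)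
        = (1 / (2 * Real.pi)) *
            ∫ x, f (n₀ (X0 (Xhat 0 x p - v p * 0) p) p) * onedr 0 x p :=
  stmt_18_general n₀ v X0 Xhat onedr f p hXder hXbij hXmono hint0
end

section
/- For n in the space B_T(ℝ³) ∩ B(ℝ³,|v|) (bounded nonnegative with sup_p ∫|T(p,q)| sup_{t,x} n(t,x,q) dq < 1 and sup|v|·n < ∞), the map n ↦ ρ_p given by 2π ρ_p(t,x,p) = n(t,x,p) 1^dr(t,x,p) is injective, and its output satisfies ρ_p(t,x,p) ≥ 0 for all t,x,p. Moreover, the function v^eff(t,x,p) = v^dr(t,x,p)/1^dr(t,x,p) is the unique element w of B(ℝ³, n·1^dr) solving the effective-velocity integral equation w(t,x,p) = v(p) + ∫ 2π T(p,q) ρ_p(t,x,q)(w(t,x,q) − w(t,x,p)) dq. -/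
open MeasureTheory

private lemma stmt19_intdom (T : ℝ → ℝ → ℝ) (p : ℝ)
    (hTp : Measurable fun q => T p q) (hT_int : Integrable fun q => T p q)
    (φ : ℝ → ℝ) (hφ : Measurable φ) (C : ℝ) (hφC : ∀ q, |φ q| ≤ C) :
    Integrable fun q => T p q * φ q := by
  refine ((hT_int.abs.const_mul C).mono' (hTp.mul hφ).aestronglyMeasurable ?_)
  refine ae_of_all _ fun q => ?_
  rw [Real.norm_eq_abs, abs_mul]
  calc |T p q| * |φ q| ≤ |T p q| * C :=
        mul_le_mul_of_nonneg_left (hφC q) (abs_nonneg _)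
    _ = C * |T p q| := mul_comm _ _

private lemma stmt19_pos (T : ℝ → ℝ → ℝ) (κ : ℝ)
    (hT_meas : Measurable (Function.uncurry T))
    (hT_int : ∀ p, Integrable (fun q => T p q))
    (hκ0 : 0 ≤ κ)
    (hA : (((∀ p q, 0 ≤ T p q) ∨ (∀ p q, T p q ≤ 0)) ∧ κ < 1) ∨ κ < 1 / 2)
    (n f : ℝ → ℝ)
    (hn0 : ∀ p, 0 ≤ n p) (Cn : ℝ) (hnC : ∀ p, n p ≤ Cn) (hn_meas : Measurable n)
    (hκn : ∀ p, (∫ q, |T p q| * n q) ≤ κ)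
    (hf_meas : Measurable f) (C1 : ℝ) (hfC : ∀ p, |f p| ≤ C1)
    (hf_eq : ∀ p, f p = 1 + ∫ q, T p q * (n q * f q)) :
    ∀ p, 0 < f p := by
  have hTp : ∀ p, Measurable fun q => T p q := fun p => hT_meas.of_uncurry_left
  have hC1 : 0 ≤ C1 := le_trans (abs_nonneg _) (hfC 0)
  have hCn : 0 ≤ Cn := le_trans (hn0 0) (hnC 0)
  have hnf_bdd : ∀ q, |n q * f q| ≤ Cn * C1 := fun q => by
    rw [abs_mul, abs_of_nonneg (hn0 q)]
    exact mul_le_mul (hnC q) (hfC q) (abs_nonneg _) hCn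
  have hint : ∀ p, Integrable fun q => T p q * (n q * f q) := fun p =>
    stmt19_intdom T p (hTp p) (hT_int p) _ (hn_meas.mul hf_meas) _ hnf_bdd
  have hTn_int : ∀ p, Integrable fun q => T p q * n q := fun p =>
    stmt19_intdom T p (hTp p) (hT_int p) n hn_meas Cn
      (fun q => by rw [abs_of_nonneg (hn0 q)]; exact hnC q)
  have hTn_abs_int : ∀ p, Integrable fun q => |T p q| * n q := fun p =>
    (hTn_int p).abs.congr (ae_of_all _ fun q => by
      simp [abs_mul, abs_of_nonneg (hn0 q)])
  rcases hA with ⟨hsign | hsign, hκ1⟩ | hκhalf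
  · -- T ≥ 0
    set m := sInf (Set.range f) with hm
    have hbdd : BddBelow (Set.range f) := ⟨-C1, by
      rintro _ ⟨p, rfl⟩; exact (abs_le.mp (hfC p)).1⟩
    have hmle : ∀ q, m ≤ f q := fun q => csInf_le hbdd ⟨q, rfl⟩
    have hJle : ∀ p, (∫ q, T p q * n q) ≤ κ := fun p => by
      have h : (fun q => T p q * n q) = fun q => |T p q| * n q :=
        funext fun q => by rw [abs_of_nonneg (hsign p q)]
      rw [h]; exact hκn p
    have hJ0 : ∀ p, 0 ≤ ∫ q, T p q * n q := fun p =>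
      integral_nonneg fun q => mul_nonneg (hsign p q) (hn0 q)
    have hIge : ∀ p, m * (∫ q, T p q * n q) ≤ ∫ q, T p q * (n q * f q) := fun p => by
      rw [← integral_const_mul]
      refine integral_mono ((hTn_int p).const_mul m) (hint p) fun q => ?_
      have h1 : 0 ≤ T p q * n q := mul_nonneg (hsign p q) (hn0 q)
      nlinarith [mul_nonneg h1 (sub_nonneg.2 (hmle q))]
    have hm0 : 0 ≤ m := by
      by_contra h; push_neg at h
      have key : ∀ p, 1 + κ * m ≤ f p := fun p => by
        rw [hf_eq p]
        have h1 := hIge p; have h2 := hJle p; have h3 := hJ0 p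
        nlinarith [mul_nonneg (sub_nonneg.2 h2) (neg_nonneg.2 h.le)]
      have hle : 1 + κ * m ≤ m :=
        le_csInf ⟨f 0, ⟨0, rfl⟩⟩ (by rintro _ ⟨p, rfl⟩; exact key p)
      nlinarith
    intro p
    rw [hf_eq p]
    nlinarith [hIge p, hJ0 p, mul_nonneg hm0 (hJ0 p)]
  · -- T ≤ 0
    set m := sInf (Set.range f) with hm
    set M := sSup (Set.range f) with hM
    have hbddb : BddBelow (Set.range f) := ⟨-C1, by
      rintro _ ⟨p, rfl⟩; exact (abs_le.mp (hfC p)).1⟩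
    have hbdda : BddAbove (Set.range f) := ⟨C1, by
      rintro _ ⟨p, rfl⟩; exact (abs_le.mp (hfC p)).2⟩
    have hmle : ∀ q, m ≤ f q := fun q => csInf_le hbddb ⟨q, rfl⟩
    have hMge : ∀ q, f q ≤ M := fun q => le_csSup hbdda ⟨q, rfl⟩
    have hJ0 : ∀ p, (∫ q, T p q * n q) ≤ 0 := fun p =>
      integral_nonpos fun q => mul_nonpos_iff.2 (Or.inr ⟨hsign p q, hn0 q⟩)
    have hJge : ∀ p, -κ ≤ ∫ q, T p q * n q := fun p => by
      have h : (fun q => |T p q| * n q) = fun q => -(T p q * n q) :=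
        funext fun q => by rw [abs_of_nonpos (hsign p q)]; ring
      have := hκn p; rw [h, integral_neg] at this; linarith
    have hIge : ∀ p, M * (∫ q, T p q * n q) ≤ ∫ q, T p q * (n q * f q) := fun p => by
      rw [← integral_const_mul]
      refine integral_mono ((hTn_int p).const_mul M) (hint p) fun q => ?_
      have h1 : T p q * n q ≤ 0 := mul_nonpos_iff.2 (Or.inr ⟨hsign p q, hn0 q⟩)
      nlinarith [mul_nonneg (neg_nonneg.2 h1) (sub_nonneg.2 (hMge q))]
    have hIle : ∀ p, (∫ q, T p q * (n q * f q)) ≤ m * ∫ q, T p q * n q := fun p => by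
      rw [← integral_const_mul]
      refine integral_mono (hint p) ((hTn_int p).const_mul m) fun q => ?_
      have h1 : T p q * n q ≤ 0 := mul_nonpos_iff.2 (Or.inr ⟨hsign p q, hn0 q⟩)
      nlinarith [mul_nonneg (neg_nonneg.2 h1) (sub_nonneg.2 (hmle q))]
    have hM0 : 0 ≤ M := by
      by_contra h; push_neg at h
      have h1 : 1 ≤ f 0 := by
        rw [hf_eq 0]
        nlinarith [hIge 0, hJ0 0, mul_nonneg (neg_nonneg.2 h.le) (neg_nonneg.2 (hJ0 0))]
      nlinarith [hMge 0]
    have hmkey : ∀ p, 1 - κ * M ≤ f p := fun p => by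
      rw [hf_eq p]
      nlinarith [hIge p, hJge p, mul_le_mul_of_nonneg_left (hJge p) hM0]
    have hm0 : 0 ≤ m := by
      by_contra h; push_neg at h
      have hMkey : M ≤ 1 - κ * m := by
        refine csSup_le ⟨f 0, ⟨0, rfl⟩⟩ ?_
        rintro _ ⟨p, rfl⟩
        rw [hf_eq p]
        nlinarith [hIle p, hJge p, mul_nonneg (neg_nonneg.2 h.le) (sub_nonneg.2 (hJge p))]
      have hmlb : 1 - κ * M ≤ m :=
        le_csInf ⟨f 0, ⟨0, rfl⟩⟩ (by rintro _ ⟨p, rfl⟩; exact hmkey p)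
      nlinarith
    have hM1 : M ≤ 1 := by
      refine csSup_le ⟨f 0, ⟨0, rfl⟩⟩ ?_
      rintro _ ⟨p, rfl⟩
      rw [hf_eq p]
      nlinarith [hIle p, hJ0 p, mul_nonneg hm0 (neg_nonneg.2 (hJ0 p))]
    intro p
    nlinarith [hmkey p]
  · -- |κ| < 1/2
    set A := sSup (Set.range fun p => |f p|) with hA
    have hbdda : BddAbove (Set.range fun p => |f p|) := ⟨C1, by
      rintro _ ⟨p, rfl⟩; exact hfC p⟩
    have hfA : ∀ q, |f q| ≤ A := fun q => le_csSup hbdda ⟨q, rfl⟩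
    have hA0 : 0 ≤ A := le_trans (abs_nonneg (f 0)) (hfA 0)
    have hIabs : ∀ p, |∫ q, T p q * (n q * f q)| ≤ κ * A := fun p => by
      calc |∫ q, T p q * (n q * f q)| ≤ ∫ q, |T p q| * (|n q| * |f q|) := by
            simpa [Real.norm_eq_abs, abs_mul] using norm_integral_le_integral_norm
              (fun q => T p q * (n q * f q))
        _ ≤ ∫ q, A * (|T p q| * n q) := by
            refine integral_mono
              ((hint p).abs.congr (ae_of_all _ fun q => by simp [abs_mul]))
              ((hTn_abs_int p).const_mul A) fun q => ?_
            rw [abs_of_nonneg (hn0 q)]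
            nlinarith [abs_nonneg (T p q), hn0 q, hfA q, abs_nonneg (f q),
              mul_nonneg (abs_nonneg (T p q)) (hn0 q)]
        _ = A * ∫ q, |T p q| * n q := integral_const_mul A _
        _ ≤ A * κ := mul_le_mul_of_nonneg_left (hκn p) hA0
        _ = κ * A := mul_comm _ _
    have hAle : A ≤ 1 + κ * A := by
      refine csSup_le ⟨|f 0|, ⟨0, rfl⟩⟩ ?_
      rintro _ ⟨p, rfl⟩
      show |f p| ≤ 1 + κ * A
      rw [hf_eq p]
      calc |1 + ∫ q, T p q * (n q * f q)| ≤ |(1:ℝ)| + |∫ q, T p q * (n q * f q)| :=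
            abs_add_le _ _
        _ ≤ 1 + κ * A := by rw [abs_one]; linarith [hIabs p]
    intro p
    rw [hf_eq p]
    have h3 : -(κ * A) ≤ ∫ q, T p q * (n q * f q) := neg_le_of_abs_le (hIabs p)
    nlinarith [mul_le_mul_of_nonneg_left hAle hκ0]

private lemma stmt19_null (T : ℝ → ℝ → ℝ) (κ : ℝ)
    (hT_meas : Measurable (Function.uncurry T))
    (hT_int : ∀ p, Integrable (fun q => T p q))
    (hT_op : ∃ M, ∀ p, (∫ q, |T p q|) ≤ M)
    (hκ1 : κ < 1)
    (n g : ℝ → ℝ) (hn0 : ∀ p, 0 ≤ n p) (hn_meas : Measurable n)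
    (Cn : ℝ) (hnC : ∀ p, n p ≤ Cn)
    (hκn : ∀ p, (∫ q, |T p q| * n q) ≤ κ)
    (hg_meas : Measurable g) (Cg : ℝ) (hgC : ∀ q, n q * |g q| ≤ Cg)
    (hg_eq : ∀ p, g p = ∫ q, T p q * (n q * g q)) :
    ∀ p, g p = 0 := by
  have hTp : ∀ p, Measurable fun q => T p q := fun p => hT_meas.of_uncurry_left
  have hCg : 0 ≤ Cg := le_trans (mul_nonneg (hn0 0) (abs_nonneg _)) (hgC 0)
  obtain ⟨Mop, hMop⟩ := hT_op
  set E : ℝ → ℝ := fun p => ∫ q, |T p q| * (n q * |g q|) with hE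
  have hE_int : ∀ p, Integrable fun q => |T p q| * (n q * |g q|) := fun p =>
    stmt19_intdom (fun p q => |T p q|) p ((hTp p).abs) (hT_int p).abs _
      (hn_meas.mul hg_meas.abs) Cg
      (fun q => by rw [abs_of_nonneg (mul_nonneg (hn0 q) (abs_nonneg _))]; exact hgC q)
  have hTn_abs_int : ∀ p, Integrable fun q => |T p q| * n q := fun p =>
    stmt19_intdom (fun p q => |T p q|) p ((hTp p).abs) (hT_int p).abs n hn_meas Cn
      (fun q => by rw [abs_of_nonneg (hn0 q)]; exact hnC q)
  have hE0 : ∀ p, 0 ≤ E p := fun p =>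
    integral_nonneg fun q => mul_nonneg (abs_nonneg _) (mul_nonneg (hn0 q) (abs_nonneg _))
  have hbdda : BddAbove (Set.range E) := by
    refine ⟨Cg * Mop, ?_⟩
    rintro _ ⟨p, rfl⟩
    calc E p ≤ ∫ q, Cg * |T p q| := by
          refine integral_mono (hE_int p) ((hT_int p).abs.const_mul Cg) fun q => ?_
          calc |T p q| * (n q * |g q|) ≤ |T p q| * Cg :=
                mul_le_mul_of_nonneg_left (hgC q) (abs_nonneg _)
            _ = Cg * |T p q| := mul_comm _ _
      _ = Cg * ∫ q, |T p q| := integral_const_mul Cg _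
      _ ≤ Cg * Mop := mul_le_mul_of_nonneg_left (hMop p) hCg
  set s := sSup (Set.range E) with hs
  have hsE : ∀ p, E p ≤ s := fun p => le_csSup hbdda ⟨p, rfl⟩
  have hs0 : 0 ≤ s := le_trans (hE0 0) (hsE 0)
  have hgE : ∀ q, |g q| ≤ E q := fun q => by
    rw [hg_eq q]
    calc |∫ r, T q r * (n r * g r)| ≤ ∫ r, |T q r| * (|n r| * |g r|) := by
          simpa [Real.norm_eq_abs, abs_mul] using norm_integral_le_integral_norm
            (fun r => T q r * (n r * g r))
      _ = E q := by
          have h : (fun r => |T q r| * (|n r| * |g r|))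
              = fun r => |T q r| * (n r * |g r|) :=
            funext fun r => by rw [abs_of_nonneg (hn0 r)]
          rw [hE, h]
  have hkey : ∀ p, E p ≤ κ * s := fun p => by
    calc E p ≤ ∫ q, s * (|T p q| * n q) := by
          refine integral_mono (hE_int p) ((hTn_abs_int p).const_mul s) fun q => ?_
          have h1 : |g q| ≤ s := le_trans (hgE q) (hsE q)
          nlinarith [abs_nonneg (T p q), hn0 q, abs_nonneg (g q),
            mul_nonneg (abs_nonneg (T p q)) (hn0 q)]
      _ = s * ∫ q, |T p q| * n q := integral_const_mul s _
      _ ≤ s * κ := mul_le_mul_of_nonneg_left (hκn p) hs0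
      _ = κ * s := mul_comm _ _
  have hsle : s ≤ κ * s := csSup_le ⟨E 0, ⟨0, rfl⟩⟩ (by rintro _ ⟨p, rfl⟩; exact hkey p)
  have hszero : s = 0 := by nlinarith
  intro p
  have : |g p| ≤ 0 := by
    calc |g p| ≤ E p := hgE p
      _ ≤ s := hsE p
      _ = 0 := hszero
  exact abs_nonpos_iff.mp this

/-- For occupation functions in `B_T(ℝ³) ∩ B(ℝ³,|v|)`, the map
`n ↦ ρ_p` given by `2π ρ_p = n·1^dr` is injective and produces `ρ_p ≥ 0`; moreover
`v^eff = v^dr/1^dr` is the unique element of `B(ℝ³, n·1^dr)` solving the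
effective-velocity integral equation
`w(t,x,p) = v(p) + ∫ 2π T(p,q) ρ_p(t,x,q) (w(t,x,q) - w(t,x,p)) dq`. -/
theorem stmt_19
    (T : ℝ → ℝ → ℝ) (v : ℝ → ℝ) (κ Cv : ℝ)
    (n n' : ℝ → ℝ → ℝ → ℝ) (onedr onedr' vdr ρp weff : ℝ → ℝ → ℝ → ℝ)
    (hT_meas : Measurable (Function.uncurry T))
    (hT_int : ∀ p, Integrable (fun q => T p q))
    (hT_op : ∃ M, ∀ p, (∫ q, |T p q|) ≤ M)
    (hA : (((∀ p q, 0 ≤ T p q) ∨ (∀ p q, T p q ≤ 0)) ∧ κ < 1) ∨ κ < 1 / 2)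
    (hv_meas : Measurable v)
    -- n is in the class B_T(ℝ³) ∩ B(ℝ³,|v|):
    (hn_nonneg : ∀ t x p, 0 ≤ n t x p)
    (hn_bdd : ∃ C, ∀ t x p, n t x p ≤ C)
    (hn_meas : ∀ t x, Measurable fun p => n t x p)
    (hκn : ∀ t x p, (∫ q, |T p q| * n t x q) ≤ κ)
    (hvn : ∀ t x p, |v p| * n t x p ≤ Cv)
    -- n' is in the same class:
    (hn'_nonneg : ∀ t x p, 0 ≤ n' t x p)
    (hn'_bdd : ∃ C, ∀ t x p, n' t x p ≤ C)
    (hn'_meas : ∀ t x, Measurable fun p => n' t x p)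
    (hκn' : ∀ t x p, (∫ q, |T p q| * n' t x q) ≤ κ)
    (hvn' : ∀ t x p, |v p| * n' t x p ≤ Cv)
    -- dressing of 1 with respect to n and n':
    (h1_meas : ∀ t x, Measurable fun p => onedr t x p)
    (h1_bdd : ∃ C, ∀ t x p, |onedr t x p| ≤ C)
    (h1_eq : ∀ t x p, onedr t x p = 1 + ∫ q, T p q * (n t x q * onedr t x q))
    (h1'_meas : ∀ t x, Measurable fun p => onedr' t x p)
    (h1'_bdd : ∃ C, ∀ t x p, |onedr' t x p| ≤ C)
    (h1'_eq : ∀ t x p, onedr' t x p = 1 + ∫ q, T p q * (n' t x q * onedr' t x q))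
    -- dressing of v with respect to n:
    (hvdr_meas : ∀ t x, Measurable fun p => vdr t x p)
    (hvdr_bdd1 : ∃ C, ∀ t x p, n t x p * |vdr t x p| ≤ C)
    (hvdr_bdd2 : ∃ C, ∀ t x p, |vdr t x p - v p| ≤ C)
    (hvdr_eq : ∀ t x p, vdr t x p = v p + ∫ q, T p q * (n t x q * vdr t x q))
    -- particle density and effective velocity:
    (hρp : ∀ t x p, 2 * Real.pi * ρp t x p = n t x p * onedr t x p)
    (hweff : ∀ t x p, weff t x p = vdr t x p / onedr t x p) :
    -- the particle density is nonnegative: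
    (∀ t x p, 0 ≤ ρp t x p) ∧
    -- the map n ↦ n·1^dr (= 2π ρ_p) is injective:
    ((∀ t x p, n t x p * onedr t x p = n' t x p * onedr' t x p) →
      ∀ t x p, n t x p = n' t x p) ∧
    -- v^eff solves the effective-velocity equation:
    (∀ t x p, weff t x p
      = v p + ∫ q, 2 * Real.pi * T p q * ρp t x q * (weff t x q - weff t x p)) ∧
    -- and it is the unique solution in B(ℝ³, n·1^dr):
    (∀ w : ℝ → ℝ → ℝ → ℝ,
      (∃ C, ∀ t x p, n t x p * onedr t x p * |w t x p| ≤ C) →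
      (∀ t x, Measurable fun p => w t x p) →
      (∀ t x p, w t x p
        = v p + ∫ q, 2 * Real.pi * T p q * ρp t x q * (w t x q - w t x p)) →
      ∀ t x p, w t x p = weff t x p) := by
  obtain ⟨Cn, hCn⟩ := hn_bdd
  obtain ⟨Cn', hCn'⟩ := hn'_bdd
  obtain ⟨C1, hC1⟩ := h1_bdd
  obtain ⟨C1', hC1'⟩ := h1'_bdd
  obtain ⟨Cvd, hCvd⟩ := hvdr_bdd1
  have hκ0 : 0 ≤ κ := le_trans
    (integral_nonneg fun q => mul_nonneg (abs_nonneg _) (hn_nonneg 0 0 q)) (hκn 0 0 0)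
  have hTp : ∀ p, Measurable fun q => T p q := fun p => hT_meas.of_uncurry_left
  have hκ1 : κ < 1 := by rcases hA with ⟨_, h⟩ | h <;> linarith
  have hCn0 : 0 ≤ Cn := le_trans (hn_nonneg 0 0 0) (hCn 0 0 0)
  have pos : ∀ t x p, 0 < onedr t x p := fun t x =>
    stmt19_pos T κ hT_meas hT_int hκ0 hA (n t x) (onedr t x) (hn_nonneg t x) Cn
      (hCn t x) (hn_meas t x) (hκn t x) (h1_meas t x) C1 (hC1 t x) (h1_eq t x)
  have pos' : ∀ t x p, 0 < onedr' t x p := fun t x =>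
    stmt19_pos T κ hT_meas hT_int hκ0 hA (n' t x) (onedr' t x) (hn'_nonneg t x) Cn'
      (hCn' t x) (hn'_meas t x) (hκn' t x) (h1'_meas t x) C1' (hC1' t x) (h1'_eq t x)
  have hweff_meas : ∀ t x, Measurable fun p => weff t x p := fun t x => by
    have h : (fun p => weff t x p) = fun p => vdr t x p / onedr t x p :=
      funext fun p => hweff t x p
    rw [h]; exact (hvdr_meas t x).div (h1_meas t x)
  have hvw : ∀ t x q, onedr t x q * weff t x q = vdr t x q := fun t x q => by
    rw [hweff t x q, mul_comm, div_mul_cancel₀ _ (pos t x q).ne']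
  have hweffC : ∀ t x p, n t x p * onedr t x p * |weff t x p| ≤ Cvd := fun t x p => by
    have h2 : onedr t x p * |weff t x p| = |vdr t x p| := by
      rw [← hvw t x p, abs_mul, abs_of_nonneg (pos t x p).le]
    calc n t x p * onedr t x p * |weff t x p|
        = n t x p * (onedr t x p * |weff t x p|) := mul_assoc _ _ _
      _ = n t x p * |vdr t x p| := by rw [h2]
      _ ≤ Cvd := hCvd t x p
  -- integral splitting identity
  have split : ∀ (w : ℝ → ℝ → ℝ → ℝ), (∀ t x, Measurable fun p => w t x p) →
      ∀ Cw : ℝ, (∀ t x p, n t x p * onedr t x p * |w t x p| ≤ Cw) → ∀ t x p,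
      (∫ q, 2 * Real.pi * T p q * ρp t x q * (w t x q - w t x p))
        = (∫ q, T p q * (n t x q * (onedr t x q * w t x q)))
          - w t x p * (onedr t x p - 1) := by
    intro w hw_meas Cw hCw t x p
    have hint1 : Integrable fun q => T p q * (n t x q * (onedr t x q * w t x q)) :=
      stmt19_intdom T p (hTp p) (hT_int p) _
        ((hn_meas t x).mul ((h1_meas t x).mul (hw_meas t x))) Cw
        (fun q => by
          rw [abs_mul, abs_of_nonneg (hn_nonneg t x q), abs_mul,
            abs_of_nonneg (pos t x q).le, ← mul_assoc]
          exact hCw t x q)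
    have hint2 : Integrable fun q => T p q * (n t x q * onedr t x q) :=
      stmt19_intdom T p (hTp p) (hT_int p) _
        ((hn_meas t x).mul (h1_meas t x)) (Cn * C1)
        (fun q => by
          rw [abs_mul, abs_of_nonneg (hn_nonneg t x q)]
          exact mul_le_mul (hCn t x q) (hC1 t x q) (abs_nonneg _) hCn0)
    have hinteq : (fun q => 2 * Real.pi * T p q * ρp t x q * (w t x q - w t x p))
        = fun q => T p q * (n t x q * (onedr t x q * w t x q))
            - (T p q * (n t x q * onedr t x q)) * w t x p := by
      funext q
      have h := hρp t x q
      linear_combination (T p q * (w t x q - w t x p)) * h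
    rw [hinteq, integral_sub hint1 (hint2.mul_const _), integral_mul_const]
    have h1 := h1_eq t x p
    have h2 : ∫ q, T p q * (n t x q * onedr t x q) = onedr t x p - 1 := by linarith
    rw [h2]
    ring
  refine ⟨?_, ?_, ?_, ?_⟩
  · -- ρp ≥ 0
    intro t x p
    have h := hρp t x p
    have h2 : 0 ≤ n t x p * onedr t x p := mul_nonneg (hn_nonneg t x p) (pos t x p).le
    nlinarith [Real.pi_pos]
  · -- injectivity
    intro hyp t x p
    have hod : onedr t x p = onedr' t x p := by
      have he : (fun q => T p q * (n t x q * onedr t x q))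
          = fun q => T p q * (n' t x q * onedr' t x q) :=
        funext fun q => by rw [hyp t x q]
      rw [h1_eq t x p, h1'_eq t x p, he]
    have h := hyp t x p
    rw [← hod] at h
    exact mul_right_cancel₀ (pos t x p).ne' h
  · -- weff solves the equation
    intro t x p
    rw [split weff hweff_meas Cvd hweffC t x p]
    have he : (fun q => T p q * (n t x q * (onedr t x q * weff t x q)))
        = fun q => T p q * (n t x q * vdr t x q) :=
      funext fun q => by rw [hvw t x q]
    rw [he]
    have h2 := hvdr_eq t x p
    have h3 := hvw t x p
    linear_combination h2 + h3
  · -- uniqueness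
    rintro w ⟨Cw, hCw⟩ hw_meas hw_eq t x p
    set g : ℝ → ℝ := fun q => onedr t x q * w t x q - vdr t x q with hgdef
    have hg_eq : ∀ r, g r = ∫ q, T r q * (n t x q * g q) := by
      intro r
      have e2 := split w hw_meas Cw hCw t x r
      have hw := hw_eq t x r
      rw [e2] at hw
      have hv := hvdr_eq t x r
      have hint1 : Integrable fun q => T r q * (n t x q * (onedr t x q * w t x q)) :=
        stmt19_intdom T r (hTp r) (hT_int r) _
          ((hn_meas t x).mul ((h1_meas t x).mul (hw_meas t x))) Cw
          (fun q => by
            rw [abs_mul, abs_of_nonneg (hn_nonneg t x q), abs_mul,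
              abs_of_nonneg (pos t x q).le, ← mul_assoc]
            exact hCw t x q)
      have hint2 : Integrable fun q => T r q * (n t x q * vdr t x q) :=
        stmt19_intdom T r (hTp r) (hT_int r) _
          ((hn_meas t x).mul (hvdr_meas t x)) Cvd
          (fun q => by
            rw [abs_mul, abs_of_nonneg (hn_nonneg t x q)]
            exact hCvd t x q)
      have hsub : ∫ q, T r q * (n t x q * g q)
          = (∫ q, T r q * (n t x q * (onedr t x q * w t x q)))
            - ∫ q, T r q * (n t x q * vdr t x q) := by
        rw [← integral_sub hint1 hint2]
        congr 1
        funext q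
        simp only [hgdef]
        ring
      rw [hsub]
      simp only [hgdef]
      linear_combination hw - hv
    have hgC : ∀ q, n t x q * |g q| ≤ Cw + Cvd := fun q => by
      have h1 : |g q| ≤ onedr t x q * |w t x q| + |vdr t x q| := by
        calc |g q| ≤ |onedr t x q * w t x q| + |vdr t x q| := abs_sub _ _
          _ = onedr t x q * |w t x q| + |vdr t x q| := by
              rw [abs_mul, abs_of_nonneg (pos t x q).le]
      calc n t x q * |g q|
          ≤ n t x q * (onedr t x q * |w t x q| + |vdr t x q|) :=
            mul_le_mul_of_nonneg_left h1 (hn_nonneg t x q)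
        _ = n t x q * onedr t x q * |w t x q| + n t x q * |vdr t x q| := by ring
        _ ≤ Cw + Cvd := add_le_add (hCw t x q) (hCvd t x q)
    have hgz : ∀ r, g r = 0 :=
      stmt19_null T κ hT_meas hT_int hT_op hκ1 (n t x) g (hn_nonneg t x)
        (hn_meas t x) Cn (hCn t x) (hκn t x)
        (((h1_meas t x).mul (hw_meas t x)).sub (hvdr_meas t x)) (Cw + Cvd) hgC hg_eq
    have hz := hgz p
    rw [hweff t x p, eq_div_iff (pos t x p).ne']
    simp only [hgdef] at hz
    linear_combination hz
end
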